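/- arXiv:1112.1545 — 3 statements merged into one kernel-verified Lean document; each statement's English description precedes it below -/
import Mathlib

section
/- Let D be a digraph with no copy of the antidirected path p4 in which every vertex has out-degree at least two. If v and v' are vertices such that N⁺(v) ∩ N⁻(v') contains two adjacent vertices x and y, then N⁺(v) = {x, y}. -/
/-- The underlying simple graph of a digraph given as a relation. -/
def underlyingGraph {V : Type*} (D : V → V → Prop) : SimpleGraph V where
  Adj a b := a ≠ b ∧ (D a b ∨ D b a)
  symm := ⟨fun _ _ h => ⟨h.1.symm, h.2.symm⟩⟩
  loopless := ⟨fun _ h => h.1 rfl⟩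

/-- `D` contains a copy of the antidirected path `p4`:
vertices x,y,z,v,w with arcs (y,x),(y,z),(v,z),(v,w). -/
def HasP4 {V : Type*} (D : V → V → Prop) : Prop :=
  ∃ x y z v w : V,
    x ≠ y ∧ x ≠ z ∧ x ≠ v ∧ x ≠ w ∧ y ≠ z ∧ y ≠ v ∧ y ≠ w ∧ z ≠ v ∧ z ≠ w ∧ v ≠ w ∧
    D y x ∧ D y z ∧ D v z ∧ D v w


/-!
Let `p → q` be the arc between `x` and `y`. An out-neighbour `w ∉ {p, q, v'}` of `v` yields the
copy `v' ← p → q ← v → w` of `p4`. And `v → v'` is impossible: with an out-neighbour `t ≠ v'` of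
`q`, which exists since `q` has out-degree two, `p ← v → v' ← q → t` would be a copy of `p4`.
-/

section P4Free

variable {V : Type*} {D : V → V → Prop}

theorem ne_of_arc (hasym : ∀ a b, D a b → ¬ D b a) {a b : V} (hab : D a b) : a ≠ b := by
  rintro rfl
  exact hasym a a hab hab

theorem hasP4_of_arcs (hasym : ∀ a b, D a b → ¬ D b a) {x y z v w : V}
    (hxz : x ≠ z) (hxv : x ≠ v) (hxw : x ≠ w) (hyv : y ≠ v) (hyw : y ≠ w) (hzw : z ≠ w)
    (hyx : D y x) (hyz : D y z) (hvz : D v z) (hvw : D v w) : HasP4 D :=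
  ⟨x, y, z, v, w, (ne_of_arc hasym hyx).symm, hxz, hxv, hxw, ne_of_arc hasym hyz, hyv, hyw,
    (ne_of_arc hasym hvz).symm, hzw, ne_of_arc hasym hvw, hyx, hyz, hvz, hvw⟩

theorem exists_arc_ne_of_two_arcs {u : V} (hu : ∃ a b, a ≠ b ∧ D u a ∧ D u b) (c : V) :
    ∃ t, t ≠ c ∧ D u t := by
  obtain ⟨a, b, hab, ha, hb⟩ := hu
  by_cases hac : a = c
  · exact ⟨b, fun hbc => hab (hac.trans hbc.symm), hb⟩
  · exact ⟨a, hac, ha⟩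

theorem not_arc_of_not_hasP4 (hasym : ∀ a b, D a b → ¬ D b a) (hP4 : ¬ HasP4 D)
    {v v' p q : V} (hpq : D p q) (hvp : D v p) (hvq : D v q) (hqv' : D q v')
    (hq : ∃ t, t ≠ v' ∧ D q t) : ¬ D v v' := by
  intro hvv'
  obtain ⟨t, htv', hqt⟩ := hq
  have hpv' : p ≠ v' := by
    rintro rfl
    exact hasym p q hpq hqv'
  have hpt : p ≠ t := by
    rintro rfl
    exact hasym p q hpq hqt
  have hvt : v ≠ t := by
    rintro rfl
    exact hasym v q hvq hqt
  exact hP4 (hasP4_of_arcs hasym hpv' (ne_of_arc hasym hpq) hpt (ne_of_arc hasym hvq) hvt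
    htv'.symm hvp hvv' hqv' hqt)

theorem eq_or_eq_of_arc_of_not_hasP4 (hasym : ∀ a b, D a b → ¬ D b a) (hP4 : ¬ HasP4 D)
    {v v' p q w : V} (hpq : D p q) (hvp : D v p) (hpv' : D p v') (hvq : D v q) (hqv' : D q v')
    (hvw : D v w) (hwv' : w ≠ v') : w = p ∨ w = q := by
  by_contra! hw
  have hvv' : v' ≠ v := by
    rintro rfl
    exact hasym p v' hpv' hvp
  exact hP4 (hasP4_of_arcs hasym (ne_of_arc hasym hqv').symm hvv' hwv'.symm
    (ne_of_arc hasym hvp).symm (Ne.symm hw.1) (Ne.symm hw.2) hpv' hpq hvq hvw)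

end P4Free

theorem stmt_4_general {V : Type*} (D : V → V → Prop)
    (hasym : ∀ a b, D a b → ¬ D b a)
    (hnop4 : ¬ HasP4 D)
    (hmin : ∀ u : V, ∃ a b : V, a ≠ b ∧ D u a ∧ D u b)
    (v v' x y : V) (hadj : D x y ∨ D y x)
    (hx : D v x ∧ D x v') (hy : D v y ∧ D y v') :
    {w | D v w} = ({x, y} : Set V) := by
  ext w
  constructor
  · intro hvw
    have mem_pair : ∀ {p q}, D p q → D v p ∧ D p v' → D v q ∧ D q v' → w = p ∨ w = q := by
      intro p q hpq hp hq
      have hwv' : w ≠ v' := by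
        rintro rfl
        exact not_arc_of_not_hasP4 hasym hnop4 hpq hp.1 hq.1 hq.2
          (exists_arc_ne_of_two_arcs (hmin q) w) hvw
      exact eq_or_eq_of_arc_of_not_hasP4 hasym hnop4 hpq hp.1 hp.2 hq.1 hq.2 hvw hwv'
    rcases hadj with hxy | hyx
    · exact mem_pair hxy hx hy
    · exact (mem_pair hyx hy hx).symm
  · rintro (rfl | rfl)
    exacts [hx.1, hy.1]

theorem stmt_4 {V : Type*} (D : V → V → Prop)
    (hasym : ∀ a b, D a b → ¬ D b a)
    (hnop4 : ¬ HasP4 D)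
    (hmin : ∀ u : V, ∃ a b : V, a ≠ b ∧ D u a ∧ D u b)
    (v v' x y : V) (hxy : x ≠ y) (hadj : D x y ∨ D y x)
    (hx : D v x ∧ D x v') (hy : D v y ∧ D y v') :
    {w | D v w} = ({x, y} : Set V) :=
  stmt_4_general D hasym hnop4 hmin v v' x y hadj hx hy
end

section
/- Let D be a 5-chromatic digraph distinct from the regular 5-tournament T5 in which every vertex has out-degree at least two, D' a 5-critical subdigraph of D containing no copy of p4, and v a vertex of D' with out-degree at least three in D'. Then v has exactly three out-neighbors v1, v2, v3 in D', and (up to relabeling) v1 → v2 and v1 → v3. -/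
/-- `D` is (isomorphic to) the regular 5-tournament `T5`. -/
def IsT5 {V : Type*} [Fintype V] (D : V → V → Prop) : Prop :=
  Fintype.card V = 5 ∧ (∀ a, ¬ D a a) ∧ (∀ a b : V, a ≠ b → (D a b ↔ ¬ D b a)) ∧
    ∀ v : V, {w | D v w}.ncard = 2 ∧ {w | D w v}.ncard = 2

open Set

theorem SimpleGraph.le_ncard_neighborSet_of_not_colorable {V : Type*} [Finite V]
    {G : SimpleGraph V} {S : Set V} {x : V} {n : ℕ}
    (hS : ¬ (G.induce S).Colorable n) (hx : (G.induce (S \ {x})).Colorable n) :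
    n ≤ (G.neighborSet x).ncard := by
  classical
  by_contra! hlt
  obtain ⟨c⟩ := hx
  let f : V → Fin n := fun y => if h : y ∈ S \ {x} then c ⟨y, h⟩ else ⟨0, by omega⟩
  obtain ⟨c₀, hc₀⟩ : ∃ c₀, c₀ ∉ f '' G.neighborSet x := by
    by_contra! h
    have hfull : (f '' G.neighborSet x).ncard = n := by
      rw [eq_univ_of_forall h, ncard_univ, Nat.card_fin]
    have := ncard_image_le (f := f) (s := G.neighborSet x)
    omega
  refine hS ⟨SimpleGraph.Coloring.mk (fun y => if y.1 = x then c₀ else f y) ?_⟩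
  rintro ⟨a, ha⟩ ⟨b, hb⟩ hab
  rw [SimpleGraph.induce_adj] at hab
  dsimp only
  by_cases hax : a = x <;> by_cases hbx : b = x
  · exact absurd (hax.trans hbx.symm) hab.ne
  · subst hax
    rw [if_pos rfl, if_neg hbx]
    exact fun h => hc₀ ⟨b, hab, h.symm⟩
  · subst hbx
    rw [if_pos rfl, if_neg hax]
    exact fun h => hc₀ ⟨a, hab.symm, h⟩
  · rw [if_neg hax, if_neg hbx]
    simp only [f, dif_pos (show a ∈ S \ {x} from ⟨ha, hax⟩),
      dif_pos (show b ∈ S \ {x} from ⟨hb, hbx⟩)]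
    exact c.valid (SimpleGraph.induce_adj.2 hab)

theorem Set.ncard_triple_le {α : Type*} (a b c : α) : ({a, b, c} : Set α).ncard ≤ 3 := by
  have := ncard_insert_le a {b, c}
  have := ncard_insert_le b {c}
  rw [ncard_singleton] at this
  omega

open Finset in
theorem Finset.eq_empty_of_card_filter_le_one {α : Type*} (s : Finset α) (r : α → α → Prop)
    [DecidableRel r] (hout : ∀ a ∈ s, 2 ≤ #{b ∈ s | r a b})
    (hin : ∀ b ∈ s, #{a ∈ s | r a b} ≤ 1) : s = ∅ := by
  have := card_mul_le_card_mul r hout hin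
  exact card_eq_zero.1 (by omega)

section Digraph

variable {V : Type*} {D : V → V → Prop}

theorem eq_or_eq_or_eq_of_not_hasP4 (hirr : ∀ a, ¬ D a a) (hp4 : ¬ HasP4 D) {y t z x w : V}
    (hyz : D y z) (htz : D t z) (hyx : D y x) (htw : D t w) (hyt : y ≠ t) (hxz : x ≠ z)
    (hwz : w ≠ z) : x = t ∨ x = w ∨ w = y := by
  have ne : ∀ {a b}, D a b → a ≠ b := fun h e => hirr _ (e ▸ h)
  by_contra! h
  exact hp4 ⟨x, y, z, t, w, (ne hyx).symm, hxz, h.1, h.2.1, ne hyz, hyt, h.2.2.symm,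
    (ne htz).symm, hwz.symm, ne htw, hyx, hyz, htz, htw⟩

theorem out_subset_pair_of_not_hasP4 (hirr : ∀ a, ¬ D a a) (hp4 : ¬ HasP4 D)
    {y t z x₁ x₂ : V} (hyz : D y z) (htz : D t z) (hyt : y ≠ t) (hy₁ : D y x₁) (hy₂ : D y x₂)
    (h₁₂ : x₁ ≠ x₂) (h₁z : x₁ ≠ z) (h₂z : x₂ ≠ z) (h₁t : x₁ ≠ t) (h₂t : x₂ ≠ t) :
    {w | D t w} ⊆ {z, y} := by
  intro w htw
  by_cases hwz : w = z
  · exact Or.inl hwz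
  rcases eq_or_eq_or_eq_of_not_hasP4 hirr hp4 hyz htz hy₁ htw hyt h₁z hwz with h | h₁ | h
  · exact absurd h h₁t
  rcases eq_or_eq_or_eq_of_not_hasP4 hirr hp4 hyz htz hy₂ htw hyt h₂z hwz with h | h₂ | h
  · exact absurd h h₂t
  · exact absurd (h₁.trans h₂.symm) h₁₂
  all_goals exact Or.inr h

theorem arc_of_out_subset_pair (hmin : ∀ u : V, ∃ a b : V, a ≠ b ∧ D u a ∧ D u b) {t p q : V}
    (h : {w | D t w} ⊆ {p, q}) : D t q := by
  obtain ⟨a, b, hab, ha, hb⟩ := hmin t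
  rcases h ha with rfl | rfl <;> rcases h hb with rfl | rfl
  all_goals first | exact absurd rfl hab | assumption

def HasOnlyBranchingParents (D : V → V → Prop) (x : V) : Prop :=
  {t | D t x}.Subsingleton ∧ ∀ t, D t x → 3 ≤ {y | D t y}.ncard

theorem HasOnlyBranchingParents.eq_of_arc [Finite V] (hirr : ∀ a, ¬ D a a) (hp4 : ¬ HasP4 D)
    (hmin : ∀ u : V, ∃ a b : V, a ≠ b ∧ D u a ∧ D u b) {y t z x₁ x₂ : V}
    (hy : HasOnlyBranchingParents D y) (hyz : D y z) (htz : D t z) (hy₁ : D y x₁)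
    (hy₂ : D y x₂) (h₁₂ : x₁ ≠ x₂) (h₁z : x₁ ≠ z) (h₂z : x₂ ≠ z) (h₁t : x₁ ≠ t) (h₂t : x₂ ≠ t) :
    t = y := by
  by_contra hty
  have hout := out_subset_pair_of_not_hasP4 hirr hp4 hyz htz (Ne.symm hty) hy₁ hy₂ h₁₂ h₁z h₂z
    h₁t h₂t
  have h3 := hy.2 t (arc_of_out_subset_pair hmin hout)
  have h2 := (ncard_le_ncard hout).trans (ncard_insert_le z {y})
  rw [ncard_singleton] at h2
  omega

theorem three_le_ncard_out_of_hasOnlyBranchingParents [Finite V] {D' : V → V → Prop} {S : Set V}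
    (hsub : ∀ a b, D' a b → D a b ∧ a ∈ S ∧ b ∈ S)
    (hdeg : ∀ x ∈ S, 4 ≤ ((underlyingGraph D').neighborSet x).ncard) {x : V} (hxS : x ∈ S)
    (hx : HasOnlyBranchingParents D x) : 3 ≤ {y | D' x y}.ncard := by
  have hN : (underlyingGraph D').neighborSet x ⊆ {y | D' x y} ∪ {t | D t x} :=
    fun y hy => hy.2.imp id fun h => (hsub y x h).1
  have hin : {t | D t x}.ncard ≤ 1 := ncard_le_one_iff_subsingleton.2 hx.1
  have := (hdeg x hxS).trans ((ncard_le_ncard hN).trans (ncard_union_le _ _))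
  omega

theorem HasOnlyBranchingParents.exists_out_subset_triple [Finite V] (hirr : ∀ a, ¬ D a a)
    (hp4 : ¬ HasP4 D) (hmin : ∀ u : V, ∃ a b : V, a ≠ b ∧ D u a ∧ D u b) {x a t : V}
    (hx : HasOnlyBranchingParents D x) (hxa : D x a) (hta : D t a) (htx : t ≠ x)
    (hout : 3 ≤ {y | D x y}.ncard) :
    D x t ∧ ∃ c, D x c ∧ c ≠ a ∧ c ≠ t ∧ {y | D x y} ⊆ {a, t, c} := by
  have few : ∀ x₁ x₂, D x x₁ → D x x₂ → x₁ ≠ x₂ → x₁ ≠ a → x₂ ≠ a → x₁ ≠ t → x₂ ≠ t → False :=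
    fun x₁ x₂ h₁ h₂ h₁₂ h₁a h₂a h₁t h₂t =>
      htx (hx.eq_of_arc hirr hp4 hmin hxa hta h₁ h₂ h₁₂ h₁a h₂a h₁t h₂t)
  have hxt : D x t := by
    by_contra hxt
    have : 1 < ({y | D x y} \ {a}).ncard := by
      rw [ncard_sdiff_singleton_of_mem (s := {y | D x y}) hxa]
      omega
    obtain ⟨x₁, ⟨h₁, h₁a⟩, x₂, ⟨h₂, h₂a⟩, h₁₂⟩ := (one_lt_ncard).1 this
    exact few x₁ x₂ h₁ h₂ h₁₂ h₁a h₂a (fun e => hxt (e ▸ h₁)) (fun e => hxt (e ▸ h₂))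
  have hta' : t ≠ a := fun e => hirr a (e ▸ hta)
  have : 0 < ({y | D x y} \ {t, a}).ncard := by
    rw [ncard_sdiff (t := {y | D x y}) (insert_subset hxt (singleton_subset_iff.2 hxa)),
      ncard_pair hta']
    omega
  obtain ⟨c, hxc, hc⟩ := (ncard_pos).1 this
  simp only [mem_insert_iff, mem_singleton_iff, not_or] at hc
  refine ⟨hxt, c, hxc, hc.2, hc.1, fun d hxd => ?_⟩
  by_contra hd
  simp only [mem_insert_iff, mem_singleton_iff, not_or] at hd
  exact few c d hxc hxd (fun e => hd.2.2 e.symm) hc.2 hd.1 hc.1 hd.2.1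

theorem hasOnlyBranchingParents_of_arc [Finite V] (hasym : ∀ a b, D a b → ¬ D b a)
    (hp4 : ¬ HasP4 D) (hmin : ∀ u : V, ∃ a b : V, a ≠ b ∧ D u a ∧ D u b)
    {D' : V → V → Prop} {S : Set V} (hsub : ∀ a b, D' a b → D a b ∧ a ∈ S ∧ b ∈ S)
    (hdeg : ∀ x ∈ S, 4 ≤ ((underlyingGraph D').neighborSet x).ncard) {x a : V} (hxS : x ∈ S)
    (hx : HasOnlyBranchingParents D x) (hxa' : D' x a) : HasOnlyBranchingParents D a := by
  have hirr : ∀ a, ¬ D a a := fun a h => hasym a a h h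
  have hxa := (hsub x a hxa').1
  have hout' := three_le_ncard_out_of_hasOnlyBranchingParents hsub hdeg hxS hx
  have hout : 3 ≤ {y | D x y}.ncard := hout'.trans (ncard_le_ncard fun y h => (hsub x y h).1)
  suffices hpar : ∀ t, D t a → t = x from
    ⟨fun t ht t' ht' => (hpar t ht).trans (hpar t' ht').symm, fun t ht => hpar t ht ▸ hout⟩
  intro t hta
  by_contra htx
  obtain ⟨hxt, c, hxc, hca, hct, hxout⟩ :=
    hx.exists_out_subset_triple hirr hp4 hmin hxa hta htx hout
  have htout : {w | D t w} ⊆ {a, c} := by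
    intro w htw
    by_cases hwa : w = a
    · exact Or.inl hwa
    rcases eq_or_eq_or_eq_of_not_hasP4 hirr hp4 hxa hta hxc htw (Ne.symm htx) hca hwa
      with h | h | h
    · exact absurd h hct
    · exact Or.inr h.symm
    · exact absurd (h ▸ htw) (hasym _ _ hxt)
  have htc : D t c := arc_of_out_subset_pair hmin htout
  have hxt' : D' x t := by
    have := eq_of_subset_of_ncard_le (fun y h => hxout (hsub x y h).1)
      ((ncard_triple_le a t c).trans hout')
    exact this ▸ Or.inr (Or.inl rfl)
  have htpar : ∀ s, D s t → s = x := fun s hst =>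
    hx.eq_of_arc hirr hp4 hmin hxt hst hxa hxc (Ne.symm hca) (fun e => hirr a (e ▸ hta))
      hct (fun e => hasym t a hta (e ▸ hst)) (fun e => hasym t c htc (e ▸ hst))
  have hN : (underlyingGraph D').neighborSet t ⊆ {a, c, x} := fun y hy =>
    hy.2.elim (fun h => (htout (hsub t y h).1).imp_right Or.inl)
      (fun h => Or.inr (Or.inr (htpar y (hsub y t h).1)))
  have := (hdeg t (hsub x t hxt').2.2).trans ((ncard_le_ncard hN).trans (ncard_triple_le a c x))
  omega

theorem out_eq_triple_of_arc (hasym : ∀ a b, D a b → ¬ D b a) (hp4 : ¬ HasP4 D)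
    (hmin : ∀ u : V, ∃ a b : V, a ≠ b ∧ D u a ∧ D u b) {D' : V → V → Prop} {v v₁ v₂ : V}
    (hD : ∀ u, D' v u → D v u) (h3 : 3 ≤ {w | D' v w}.ncard) (h₁ : D' v v₁) (h₂ : D' v v₂)
    (h₁₂ : D v₁ v₂) :
    ∃ v₃, v₁ ≠ v₃ ∧ v₂ ≠ v₃ ∧ {w | D' v w} = {v₁, v₂, v₃} ∧ D v₁ v₃ := by
  have hirr : ∀ a, ¬ D a a := fun a h => hasym a a h h
  have hout : ∀ u, D' v u → u ≠ v₁ → u ≠ v₂ → {w | D v₁ w} ⊆ {v₂, u} := by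
    intro u hu hu₁ hu₂ w hw
    by_cases hw₂ : w = v₂
    · exact Or.inl hw₂
    rcases eq_or_eq_or_eq_of_not_hasP4 hirr hp4 (hD _ h₂) h₁₂ (hD _ hu) hw
      (fun e => hirr v (e ▸ hD _ h₁)) hu₂ hw₂ with h | h | h
    · exact absurd h hu₁
    · exact Or.inr h.symm
    · exact absurd (h ▸ hw) (hasym _ _ (hD _ h₁))
  have h2 : ({v₁, v₂} : Set V).ncard < {w | D' v w}.ncard := by
    have := ncard_insert_le v₁ {v₂}
    rw [ncard_singleton] at this
    omega
  obtain ⟨v₃, h₃, hv₃⟩ := exists_mem_notMem_of_ncard_lt_ncard h2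
  simp only [mem_insert_iff, mem_singleton_iff, not_or] at hv₃
  have h₁₃ : D v₁ v₃ := arc_of_out_subset_pair hmin (hout v₃ h₃ hv₃.1 hv₃.2)
  refine ⟨v₃, Ne.symm hv₃.1, Ne.symm hv₃.2, subset_antisymm (fun u hu => ?_)
    (insert_subset h₁ (insert_subset h₂ (singleton_subset_iff.2 h₃))), h₁₃⟩
  by_cases hu₁ : u = v₁
  · exact Or.inl hu₁
  by_cases hu₂ : u = v₂
  · exact Or.inr (Or.inl hu₂)
  exact Or.inr (Or.inr ((hout u hu hu₁ hu₂ h₁₃).resolve_left hv₃.2).symm)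

section IndependentOut

variable {v : V} {N : Set V}

theorem out_subset_pair_of_independent (hirr : ∀ a, ¬ D a a) (hp4 : ¬ HasP4 D)
    (hN : ∀ u ∈ N, D v u) (hind : ∀ a ∈ N, ∀ b ∈ N, ¬ D a b) {u u' u'' t : V} (hu : u ∈ N)
    (hu' : u' ∈ N) (hu'' : u'' ∈ N) (huu' : u ≠ u') (huu'' : u ≠ u'') (hu'u'' : u' ≠ u'')
    (htv : t ≠ v) (htu : D t u) : {w | D t w} ⊆ {u, v} :=
  out_subset_pair_of_not_hasP4 hirr hp4 (hN u hu) htu (Ne.symm htv) (hN u' hu') (hN u'' hu'')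
    hu'u'' (Ne.symm huu') (Ne.symm huu'') (fun e => hind u' hu' u hu (e ▸ htu))
    (fun e => hind u'' hu'' u hu (e ▸ htu))

theorem false_of_two_foreign_parents (hirr : ∀ a, ¬ D a a) (hp4 : ¬ HasP4 D)
    (hmin : ∀ u : V, ∃ a b : V, a ≠ b ∧ D u a ∧ D u b) (hN : ∀ u ∈ N, D v u)
    (hind : ∀ a ∈ N, ∀ b ∈ N, ¬ D a b) {u u' u'' t t' : V} (hu : u ∈ N) (hu' : u' ∈ N)
    (hu'' : u'' ∈ N) (huu' : u ≠ u') (huu'' : u ≠ u'') (hu'u'' : u' ≠ u'') (htv : t ≠ v)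
    (ht'v : t' ≠ v) (htu : D t u) (ht'u' : D t' u') : False := by
  have ht := out_subset_pair_of_independent hirr hp4 hN hind hu hu' hu'' huu' huu'' hu'u''
    htv htu
  have ht' := out_subset_pair_of_independent hirr hp4 hN hind hu' hu hu'' (Ne.symm huu') hu'u''
    huu'' ht'v ht'u'
  have hne : ∀ {w}, w ∈ N → w ≠ v := fun hw e => hirr v (e ▸ hN _ hw)
  have htt' : t ≠ t' := by
    rintro rfl
    exact (ht ht'u').elim (fun h => huu' h.symm) (hne hu')
  rcases eq_or_eq_or_eq_of_not_hasP4 hirr hp4 (arc_of_out_subset_pair hmin ht)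
    (arc_of_out_subset_pair hmin ht') htu ht'u' htt' (hne hu) (hne hu') with h | h | h
  · exact hind u hu u' hu' (h ▸ ht'u')
  · exact huu' h
  · exact hind u' hu' u hu (h ▸ htu)

theorem exists_sole_parent_of_independent [Finite V] (hasym : ∀ a b, D a b → ¬ D b a)
    (hp4 : ¬ HasP4 D) (hmin : ∀ u : V, ∃ a b : V, a ≠ b ∧ D u a ∧ D u b)
    (hN : ∀ u ∈ N, D v u) (hind : ∀ a ∈ N, ∀ b ∈ N, ¬ D a b) (h3 : 3 ≤ N.ncard) :
    ∃ r ∈ N, ∀ t, D t r → t = v := by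
  have hirr : ∀ a, ¬ D a a := fun a h => hasym a a h h
  obtain ⟨u₁, u₂, u₃, h₁, h₂, h₃, h₁₂, h₁₃, h₂₃⟩ := (two_lt_ncard_iff).1 h3
  by_cases h : ∃ t, t ≠ v ∧ D t u₁
  · obtain ⟨t, htv, ht⟩ := h
    exact ⟨u₂, h₂, fun t' ht' => by_contra fun ht'v =>
      false_of_two_foreign_parents hirr hp4 hmin hN hind h₁ h₂ h₃ h₁₂ h₁₃ h₂₃ htv ht'v ht ht'⟩
  · exact ⟨u₁, h₁, fun t ht => by_contra fun htv => h ⟨t, htv, ht⟩⟩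

end IndependentOut

theorem false_of_independent_out [Fintype V] (hasym : ∀ a b, D a b → ¬ D b a)
    (hp4 : ¬ HasP4 D) (hmin : ∀ u : V, ∃ a b : V, a ≠ b ∧ D u a ∧ D u b)
    {D' : V → V → Prop} {S : Set V} (hsub : ∀ a b, D' a b → D a b ∧ a ∈ S ∧ b ∈ S)
    (hdeg : ∀ x ∈ S, 4 ≤ ((underlyingGraph D').neighborSet x).ncard) {v : V}
    (hind : ∀ a b, D' v a → D' v b → ¬ D a b) (h3 : 3 ≤ {w | D' v w}.ncard) : False := by
  classical
  obtain ⟨r, hvr, hr⟩ := exists_sole_parent_of_independent hasym hp4 hmin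
    (fun u h => (hsub v u h).1) (fun a ha b hb => hind a b ha hb) h3
  have hrP : HasOnlyBranchingParents D r :=
    ⟨fun t ht t' ht' => (hr t ht).trans (hr t' ht').symm,
      fun t ht => hr t ht ▸ h3.trans (ncard_le_ncard fun y h => (hsub v y h).1)⟩
  let C := Finset.univ.filter fun x => x ∈ S ∧ HasOnlyBranchingParents D x
  have hrC : r ∈ C := by simp [C, (hsub v r hvr).2.2, hrP]
  suffices C = ∅ by simp [this] at hrC
  refine Finset.eq_empty_of_card_filter_le_one C D' (fun x hx => ?_) (fun y hy => ?_)
  · simp only [C, Finset.mem_filter, Finset.mem_univ, true_and] at hx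
    have hCx : {y | D' x y} = ↑({y ∈ C | D' x y}) := by
      ext y
      simp only [C, Finset.coe_filter, Finset.mem_filter, Finset.mem_univ, true_and,
        mem_ofPred_eq]
      exact ⟨fun h => ⟨⟨(hsub x y h).2.2,
        hasOnlyBranchingParents_of_arc hasym hp4 hmin hsub hdeg hx.1 hx.2 h⟩, h⟩, And.right⟩
    have := three_le_ncard_out_of_hasOnlyBranchingParents hsub hdeg hx.1 hx.2
    rw [hCx, ncard_coe_finset] at this
    omega
  · simp only [C, Finset.mem_filter, Finset.mem_univ, true_and] at hy
    exact Finset.card_le_one.2 fun a ha b hb => hy.2.1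
      (hsub a y (Finset.mem_filter.1 ha).2).1 (hsub b y (Finset.mem_filter.1 hb).2).1

end Digraph

theorem stmt_6_general {V : Type*} [Fintype V] (D : V → V → Prop)
    (hasym : ∀ a b, D a b → ¬ D b a)
    (hmin : ∀ u : V, ∃ a b : V, a ≠ b ∧ D u a ∧ D u b)
    (hnop4 : ¬ HasP4 D)
    (S : Set V) (D' : V → V → Prop)
    (hsub : ∀ a b, D' a b → D a b ∧ a ∈ S ∧ b ∈ S)
    (hcrit5 : ((underlyingGraph D').induce S).chromaticNumber = 5)
    (hcrit : ∀ v ∈ S, ((underlyingGraph D').induce (S \ {v})).chromaticNumber < 5)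
    (v : V) (hdeg : 3 ≤ {w | D' v w}.ncard) :
    ∃ v1 v2 v3 : V, v1 ≠ v2 ∧ v1 ≠ v3 ∧ v2 ≠ v3 ∧
      {w | D' v w} = ({v1, v2, v3} : Set V) ∧ D v1 v2 ∧ D v1 v3 := by
  have hnot4 : ¬ ((underlyingGraph D').induce S).Colorable 4 := fun h =>
    absurd (hcrit5 ▸ h.chromaticNumber_le) (by decide)
  have hdeg4 : ∀ x ∈ S, 4 ≤ ((underlyingGraph D').neighborSet x).ncard := fun x hx =>
    SimpleGraph.le_ncard_neighborSet_of_not_colorable hnot4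
      (SimpleGraph.chromaticNumber_le_iff_colorable.1 (Order.le_of_lt_add_one (hcrit x hx)))
  by_cases harc : ∃ a b, D' v a ∧ D' v b ∧ D a b
  · obtain ⟨v₁, v₂, h₁, h₂, h₁₂⟩ := harc
    obtain ⟨v₃, h₁₃, h₂₃, hout, h₁₃'⟩ :=
      out_eq_triple_of_arc hasym hnop4 hmin (fun u h => (hsub v u h).1) hdeg h₁ h₂ h₁₂
    exact ⟨v₁, v₂, v₃, fun e => hasym _ _ h₁₂ (e ▸ h₁₂), h₁₃, h₂₃, hout, h₁₂, h₁₃'⟩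
  · exact (false_of_independent_out hasym hnop4 hmin hsub hdeg4
      (fun a b ha hb hab => harc ⟨a, b, ha, hb, hab⟩) hdeg).elim

theorem stmt_6 {V : Type*} [Fintype V] (D : V → V → Prop)
    (hasym : ∀ a b, D a b → ¬ D b a)
    (hchrom : (underlyingGraph D).chromaticNumber = 5)
    (hnotT5 : ¬ IsT5 D)
    (hmin : ∀ u : V, ∃ a b : V, a ≠ b ∧ D u a ∧ D u b)
    (hnop4 : ¬ HasP4 D)
    (S : Set V) (D' : V → V → Prop)
    (hsub : ∀ a b, D' a b → D a b ∧ a ∈ S ∧ b ∈ S)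
    (hcrit5 : ((underlyingGraph D').induce S).chromaticNumber = 5)
    (hcrit : ∀ v ∈ S, ((underlyingGraph D').induce (S \ {v})).chromaticNumber < 5)
    (v : V) (hv : v ∈ S) (hdeg : 3 ≤ {w | D' v w}.ncard) :
    ∃ v1 v2 v3 : V, v1 ≠ v2 ∧ v1 ≠ v3 ∧ v2 ≠ v3 ∧
      {w | D' v w} = ({v1, v2, v3} : Set V) ∧ D v1 v2 ∧ D v1 v3 :=
  stmt_6_general D hasym hmin hnop4 S D' hsub hcrit5 hcrit v hdeg
end

section
/- In a maximal spanning out-forest F of a digraph D, each level set L_i = {v : l_F(v) = i} is an independent set of D. -/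
/-- A directed chain (directed path) in `F`, given by an injective enumeration. -/
def IsDirChain {V : Type*} (F : V → V → Prop) {n : ℕ} (f : Fin (n + 1) → V) : Prop :=
  Function.Injective f ∧ ∀ i j : Fin (n + 1), (j : ℕ) = (i : ℕ) + 1 → F (f i) (f j)

/-- There is a directed path of `F` with `n+1` vertices ending at `v`. -/
def EndsAt {V : Type*} (F : V → V → Prop) (n : ℕ) (v : V) : Prop :=
  ∃ f : Fin (n + 1) → V, IsDirChain F f ∧ f (Fin.last n) = v

/-- The level of `v` in `F` is `i`: the order of a longest directed path of `F`
ending at `v` equals `i`. -/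
def LevelIs {V : Type*} (F : V → V → Prop) (v : V) (i : ℕ) : Prop :=
  1 ≤ i ∧ EndsAt F (i - 1) v ∧ ∀ m, EndsAt F m v → m + 1 ≤ i

/-- There is a directed path in `F` from `u` to `v`. -/
def DirReach {V : Type*} (F : V → V → Prop) (u v : V) : Prop :=
  ∃ (n : ℕ) (f : Fin (n + 1) → V), IsDirChain F f ∧ f 0 = u ∧ f (Fin.last n) = v

/-- `F` is an out-forest: every vertex has in-degree at most one and the
underlying graph is acyclic (so every component is an out-branching). -/
def IsOutForest {V : Type*} (F : V → V → Prop) : Prop :=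
  (∀ a b c, F a c → F b c → a = b) ∧ (underlyingGraph F).IsAcyclic

/-- `F` is a maximal spanning out-forest of `D`: a spanning subdigraph of `D`
which is an out-forest, such that for every arc `x → y` of `D` with
`l_F(x) ≥ l_F(y)` there is a directed path from `y` to `x` in `F`. -/
def IsMaxSpanningOutForest {V : Type*} (D F : V → V → Prop) : Prop :=
  (∀ a b, F a b → D a b) ∧ IsOutForest F ∧
    ∀ x y, D x y → ∀ i j, LevelIs F x i → LevelIs F y j → j ≤ i → DirReach F y x

/-
The level strictly increases along every directed path of `F`: appending an arc `x → y` to a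
directed path ending at `x` again gives a directed path, since `y` cannot already lie on it:
its in-neighbour there would have to be `x`, or else the path would close up into a directed
cycle. Cycles of length at least 3 are excluded by acyclicity of the underlying graph; loops and
2-cycles are invisible to that simple graph and are excluded by asymmetry of `D`. Now if `u → v` were an arc of `D` between two
vertices of the same level, maximality would give a directed path of `F` from `v` to `u`,
so `l_F(v) < l_F(u)`.
-/

theorem SimpleGraph.exists_walk_support_eq_ofFn {V : Type*} (G : SimpleGraph V) :
    ∀ {n : ℕ} (f : Fin (n + 1) → V),
    (∀ i j : Fin (n + 1), (j : ℕ) = (i : ℕ) + 1 → G.Adj (f i) (f j)) →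
    ∃ w : G.Walk (f 0) (f (Fin.last n)), w.support = List.ofFn f
  | 0, f, _ => ⟨Walk.nil.copy rfl (congrArg f (Fin.ext rfl)), by simp⟩
  | n + 1, f, hadj => by
    obtain ⟨w, hw⟩ := G.exists_walk_support_eq_ofFn (f ∘ Fin.succ)
      (fun i j h => hadj i.succ j.succ (by simp [h]))
    have h01 : G.Adj (f 0) ((f ∘ Fin.succ) 0) := hadj 0 1 rfl
    refine ⟨.cons h01 (w.copy rfl (congrArg f (Fin.succ_last n))), ?_⟩
    rw [Walk.support_cons, Walk.support_copy, hw]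
    simp [List.ofFn_succ]

section DirectedChains

variable {V : Type*} {F : V → V → Prop}

theorem IsDirChain.exists_path_length {n : ℕ} {f : Fin (n + 1) → V} (hf : IsDirChain F f) :
    ∃ p : (underlyingGraph F).Path (f 0) (f (Fin.last n)), p.1.length = n := by
  obtain ⟨w, hw⟩ := (underlyingGraph F).exists_walk_support_eq_ofFn f fun i j hij =>
    ⟨hf.1.ne (by rintro rfl; omega), Or.inl (hf.2 i j hij)⟩
  refine ⟨⟨w, by rw [SimpleGraph.Walk.isPath_def, hw]; exact List.nodup_ofFn.mpr hf.1⟩, ?_⟩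
  simpa [hw] using w.length_support.symm

theorem IsDirChain.snoc {n : ℕ} {f : Fin (n + 1) → V} {y : V} (hf : IsDirChain F f)
    (hy : y ∉ Set.range f) (hlast : F (f (Fin.last n)) y) :
    IsDirChain F (Fin.snoc f y : Fin (n + 2) → V) := by
  refine ⟨Fin.snoc_injective_of_injective hf.1 hy, fun i j hij => ?_⟩
  induction j using Fin.lastCases with
  | last =>
    obtain rfl : i = (Fin.last n).castSucc := Fin.ext (by simp at hij ⊢; omega)
    simpa using hlast
  | cast j =>
    obtain ⟨i, rfl⟩ : ∃ i' : Fin (n + 1), i = i'.castSucc :=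
      ⟨⟨i, by simp at hij; omega⟩, rfl⟩
    simpa using hf.2 i j (by simpa using hij)

theorem IsDirChain.not_arc_last_zero (hac : (underlyingGraph F).IsAcyclic)
    (hasymm : ∀ a b, F a b → ¬ F b a) {n : ℕ} {f : Fin (n + 1) → V} (hf : IsDirChain F f) :
    ¬ F (f (Fin.last n)) (f 0) := by
  intro hback
  match n, f, hf, hback with
  | 0, f, _, hback => exact hasymm _ _ hback hback
  | 1, f, hf, hback => exact hasymm _ _ (hf.2 0 1 rfl) hback
  | n + 2, f, hf, hback =>
    obtain ⟨p, hp⟩ := hf.exists_path_length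
    have hne : f 0 ≠ f (Fin.last (n + 2)) := hf.1.ne (by simp [Fin.ext_iff])
    -- paths in a forest are unique, and the arc `hback` is a path of length 1
    have hsingle := (hac.subsingleton_path _ _).elim p (.singleton ⟨hne, Or.inr hback⟩)
    have : p.1.length = 1 := by rw [hsingle]; rfl
    omega

theorem IsDirChain.notMem_range_of_arc (hF : IsOutForest F) (hasymm : ∀ a b, F a b → ¬ F b a)
    {n : ℕ} {f : Fin (n + 1) → V} (hf : IsDirChain F f) {y : V}
    (hy : F (f (Fin.last n)) y) : y ∉ Set.range f := by
  rintro ⟨k, rfl⟩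
  cases k using Fin.cases with
  | zero => exact hf.not_arc_last_zero hF.2 hasymm hy
  | succ k => exact k.castSucc_ne_last (hf.1 (hF.1 _ _ _ (hf.2 _ _ (by simp)) hy))

theorem EndsAt.of_arc (hF : IsOutForest F) (hasymm : ∀ a b, F a b → ¬ F b a)
    {m : ℕ} {x y : V} (hx : EndsAt F m x) (hxy : F x y) : EndsAt F (m + 1) y := by
  obtain ⟨f, hf, rfl⟩ := hx
  exact ⟨_, hf.snoc (hf.notMem_range_of_arc hF hasymm hxy) hxy, by simp⟩

theorem IsDirChain.endsAt_last (hF : IsOutForest F) (hasymm : ∀ a b, F a b → ¬ F b a)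
    {m N : ℕ} {g : Fin (N + 1) → V} (hg : IsDirChain F g) (h : EndsAt F m (g 0)) :
    EndsAt F (m + N) (g (Fin.last N)) := by
  suffices ∀ k : Fin (N + 1), EndsAt F (m + k) (g k) by simpa using this (Fin.last N)
  intro k
  induction k using Fin.induction with
  | zero => simpa using h
  | succ k ih => simpa [Nat.add_assoc] using ih.of_arc hF hasymm (hg.2 _ _ (by simp))

theorem LevelIs.lt_of_dirReach (hF : IsOutForest F) (hasymm : ∀ a b, F a b → ¬ F b a)
    {x y : V} {i j : ℕ} (hx : LevelIs F x i) (hy : LevelIs F y j) (hxy : DirReach F x y)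
    (hne : x ≠ y) : i < j := by
  obtain ⟨N, g, hg, rfl, rfl⟩ := hxy
  have hN : N ≠ 0 := by rintro rfl; exact hne rfl
  have := hy.2.2 _ (hg.endsAt_last hF hasymm hx.2.1)
  omega

end DirectedChains

theorem stmt_13 {V : Type*} (D F : V → V → Prop)
    (hasym : ∀ a b, D a b → ¬ D b a)
    (hF : IsMaxSpanningOutForest D F) :
    ∀ (i : ℕ) (u v : V), LevelIs F u i → LevelIs F v i → u ≠ v → ¬ D u v := by
  intro i u v hu hv huv hD
  obtain ⟨hsub, hforest, hmax⟩ := hF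
  have hasymmF : ∀ a b, F a b → ¬ F b a := fun a b hab hba =>
    hasym a b (hsub a b hab) (hsub b a hba)
  exact (hv.lt_of_dirReach hforest hasymmF hu (hmax u v hD i i hu hv le_rfl) huv.symm).false
end
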